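/- Let q ≥ 2 and let G be a homogeneous tree of order q+1 on a vertex set V: a connected acyclic simple graph in which every vertex has exactly q+1 neighbors. Fix a root o ∈ V and a natural number m, and let S = l_m = {v ∈ V : dist(o, v) = m} be the level of order m, where dist is the graph distance. Then for every φ : V → ℂ with support contained in S, ∑_{v∈V} |φ(v)|² ≤ (1 + q/(q+1)²)^{−1}·∑_{v∈V} |(𝓛φ)(v)|², where 𝓛 is the normalized Laplacian of G; that is, every level l_m is a Λ-set with Λ = (1 + q/(q+1)²)^{−1/2}. -/

import Mathlib

/-- The normalized Laplacian of a locally finite simple graph, acting on `f : V → ℂ`: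
`(𝓛 f) v = f v − ∑_{u ∼ v} f u / √(d u · d v)`. -/
noncomputable def nLap {V : Type*} (G : SimpleGraph V) [G.LocallyFinite] (f : V → ℂ) (v : V) : ℂ :=
  f v - ∑ u ∈ G.neighborFinset v, f u / (Real.sqrt ((G.degree u : ℝ) * (G.degree v : ℝ)) : ℂ)

/-!
The neighbours of a vertex of level `m` lie on levels `m ± 1`, where `φ` vanishes, so `𝓛φ = φ` on
level `m`. A vertex `w` of level `m + 1` has exactly one neighbour `u` of level `m`, so
`𝓛φ w = -φ u / (q + 1)`; and each `u` has at most one neighbour closer to the root, hence at least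
`q` such children, the children of distinct `u` being distinct. So level `m + 1` contributes at least
`q / (q + 1)² · ∑ |φ|²` to `∑ |𝓛φ|²`, on top of the contribution `∑ |φ|²` of level `m`.
-/

open Finset

namespace SimpleGraph

variable {V : Type*} {G : SimpleGraph V}

noncomputable def childFinset (G : SimpleGraph V) [G.LocallyFinite] (o u : V) : Finset V :=
  {w ∈ G.neighborFinset u | G.dist o w = G.dist o u + 1}

section childFinset

variable [G.LocallyFinite] {o u u' w : V}

@[simp]
lemma mem_childFinset : w ∈ G.childFinset o u ↔ G.Adj u w ∧ G.dist o w = G.dist o u + 1 := by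
  simp [childFinset]

lemma IsAcyclic.eq_of_mem_childFinset (hG : G.IsAcyclic) (hu : w ∈ G.childFinset o u)
    (hu' : w ∈ G.childFinset o u') : u = u' := by
  rw [mem_childFinset] at hu hu'
  have hreach (x : V) (hx : G.Adj x w) : G.Reachable o x :=
    (Reachable.of_dist_ne_zero (by omega : G.dist o w ≠ 0)).trans hx.symm.reachable
  obtain ⟨P, -, hP⟩ := (hreach u hu.1).exists_path_of_dist
  obtain ⟨Q, -, hQ⟩ := (hreach u' hu'.1).exists_path_of_dist
  have hPw : (P.concat hu.1).IsPath := Walk.isPath_of_length_eq_dist _ (by simp [hP, hu.2])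
  have hQw : (Q.concat hu'.1).IsPath := Walk.isPath_of_length_eq_dist _ (by simp [hQ, hu'.2])
  have hPQ := (hG.subsingleton_path o w).elim ⟨_, hPw⟩ ⟨_, hQw⟩
  exact (Walk.concat_inj (congrArg Subtype.val hPQ)).1

lemma IsAcyclic.pairwiseDisjoint_childFinset (hG : G.IsAcyclic) (o : V) (s : Set V) :
    s.PairwiseDisjoint (G.childFinset o) :=
  fun _ _ _ _ hne => Finset.disjoint_left.mpr fun _ hw hw' => hne (hG.eq_of_mem_childFinset hw hw')

lemma IsTree.degree_le_card_childFinset_add_one (hG : G.IsTree) (o u : V) :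
    G.degree u ≤ #(G.childFinset o u) + 1 := by
  have hparents : #{w ∈ G.neighborFinset u | G.dist o w ≠ G.dist o u + 1} ≤ 1 := by
    have parent {w : V} (hw : w ∈ {w ∈ G.neighborFinset u | G.dist o w ≠ G.dist o u + 1}) :
        u ∈ G.childFinset o w := by
      rw [mem_filter, mem_neighborFinset] at hw
      exact mem_childFinset.mpr
        ⟨hw.1.symm, (hG.dist_eq_dist_add_one_of_adj o hw.1).resolve_right hw.2⟩
    exact card_le_one.mpr fun w hw w' hw' =>
      hG.isAcyclic.eq_of_mem_childFinset (parent hw) (parent hw')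
  rw [← card_neighborFinset_eq_degree, ← card_filter_add_card_filter_not
    (fun w => G.dist o w = G.dist o u + 1)]
  exact Nat.add_le_add_left hparents _

end childFinset

lemma Connected.exists_adj_dist_eq_of_dist_eq_add_one (hconn : G.Connected) {o v : V} {n : ℕ}
    (hv : G.dist o v = n + 1) : ∃ u, G.Adj u v ∧ G.dist o u = n := by
  obtain ⟨p, hp⟩ := hconn.exists_walk_length_eq_dist v o
  rw [dist_comm, hv] at hp
  cases p with
  | nil => simp at hp
  | @cons _ u _ hadj p =>
    have hle : G.dist o u ≤ n := by
      rw [dist_comm]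
      exact (dist_le p).trans (by simp only [Walk.length_cons] at hp; omega)
    have hstep := hadj.symm.diff_dist_adj (u := o)
    exact ⟨u, hadj.symm, by omega⟩

lemma Connected.finite_setOf_dist_eq [G.LocallyFinite] (hconn : G.Connected) (o : V) (n : ℕ) :
    {v | G.dist o v = n}.Finite := by
  induction n with
  | zero => simp [hconn.dist_eq_zero_iff]
  | succ n ih =>
    refine (ih.biUnion fun u _ => (G.neighborSet u).toFinite).subset fun v hv => ?_
    obtain ⟨u, hadj, hu⟩ := hconn.exists_adj_dist_eq_of_dist_eq_add_one hv
    exact Set.mem_biUnion hu hadj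

end SimpleGraph

open SimpleGraph

section nLap

variable {V : Type*} {G : SimpleGraph V} [G.LocallyFinite]

lemma nLap_of_isRegularOfDegree {d : ℕ} (hd : G.IsRegularOfDegree d) (f : V → ℂ) (v : V) :
    nLap G f v = f v - (∑ u ∈ G.neighborFinset v, f u) / d := by
  simp only [nLap, hd.degree_eq, Real.sqrt_mul_self (Nat.cast_nonneg d), Complex.ofReal_natCast,
    sum_div]

lemma hasFiniteSupport_nLap {f : V → ℂ} (hf : f.HasFiniteSupport) :
    (nLap G f).HasFiniteSupport := by
  refine (hf.union (hf.biUnion fun u _ => (G.neighborSet u).toFinite)).subset fun v hv => ?_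
  by_contra hout
  simp only [Set.mem_union, Set.mem_iUnion, Function.mem_support, mem_neighborSet, not_or,
    not_exists, not_not] at hout
  refine hv ?_
  rw [nLap, hout.1, zero_sub, neg_eq_zero]
  refine sum_eq_zero fun u hu => ?_
  rw [not_imp_not.mp (hout.2 u) ((mem_neighborFinset ..).mp hu).symm, zero_div]

end nLap

namespace SimpleGraph.IsTree

variable {V : Type*} {G : SimpleGraph V} [G.LocallyFinite] {o u v w : V} {m : ℕ} {φ : V → ℂ}

lemma nLap_eq_self_of_dist_eq (hG : G.IsTree) (hφ : ∀ v, G.dist o v ≠ m → φ v = 0)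
    (hv : G.dist o v = m) : nLap G φ v = φ v := by
  rw [nLap, sub_eq_self]
  refine sum_eq_zero fun u hu => ?_
  have hne := hG.dist_ne_of_adj o ((mem_neighborFinset ..).mp hu)
  rw [hφ u (by omega), zero_div]

lemma nLap_of_mem_childFinset (hG : G.IsTree) {d : ℕ} (hd : G.IsRegularOfDegree d)
    (hφ : ∀ v, G.dist o v ≠ m → φ v = 0) (hu : G.dist o u = m) (hw : w ∈ G.childFinset o u) :
    nLap G φ w = -(φ u / d) := by
  have hw' := mem_childFinset.mp hw
  rw [nLap_of_isRegularOfDegree hd, hφ w (by omega),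
    sum_eq_single_of_mem u ((mem_neighborFinset ..).mpr hw'.1.symm) ?_, zero_sub]
  intro x hx hxu
  refine hφ x fun hxm => hxu (hG.isAcyclic.eq_of_mem_childFinset ?_ hw)
  exact mem_childFinset.mpr ⟨((mem_neighborFinset ..).mp hx).symm, by omega⟩

lemma mul_norm_sq_le_sum_childFinset_norm_nLap_sq (hG : G.IsTree) {q : ℕ}
    (hd : G.IsRegularOfDegree (q + 1)) (hφ : ∀ v, G.dist o v ≠ m → φ v = 0)
    (hu : G.dist o u = m) :
    q / ((q : ℝ) + 1) ^ 2 * ‖φ u‖ ^ 2 ≤ ∑ w ∈ G.childFinset o u, ‖nLap G φ w‖ ^ 2 := by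
  have hq : q ≤ #(G.childFinset o u) := by
    have := hG.degree_le_card_childFinset_add_one o u
    rw [hd.degree_eq] at this
    omega
  calc q / ((q : ℝ) + 1) ^ 2 * ‖φ u‖ ^ 2
      ≤ #(G.childFinset o u) * (‖φ u‖ ^ 2 / ((q : ℝ) + 1) ^ 2) := by
        rw [div_mul_eq_mul_div, mul_div_assoc]
        gcongr
    _ = ∑ w ∈ G.childFinset o u, ‖nLap G φ w‖ ^ 2 := by
        rw [← nsmul_eq_mul, ← sum_const]
        refine sum_congr rfl fun w hw => ?_
        rw [hG.nLap_of_mem_childFinset hd hφ hu hw, norm_neg, norm_div, div_pow,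
          Complex.norm_natCast]
        push_cast
        rfl

theorem one_add_div_mul_tsum_norm_sq_le_tsum_norm_nLap_sq (hG : G.IsTree) {q : ℕ}
    (hd : G.IsRegularOfDegree (q + 1)) (hφ : ∀ v, G.dist o v ≠ m → φ v = 0) :
    (1 + q / ((q : ℝ) + 1) ^ 2) * ∑' v, ‖φ v‖ ^ 2 ≤ ∑' v, ‖nLap G φ v‖ ^ 2 := by
  classical
  set S := (hG.connected.finite_setOf_dist_eq o m).toFinset
  have hS (v : V) : v ∈ S ↔ G.dist o v = m := Set.Finite.mem_toFinset _
  have hφS : φ.HasFiniteSupport :=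
    S.finite_toSet.subset fun v hv => (hS v).mpr (not_imp_comm.mp (hφ v) hv)
  have hdisj : Disjoint S (S.biUnion (G.childFinset o)) := by
    simp only [Finset.disjoint_left, mem_biUnion, mem_childFinset, hS]
    rintro v hv ⟨u, hu, -, hvu⟩
    omega
  have hsummable : Summable fun v => ‖nLap G φ v‖ ^ 2 :=
    summable_of_hasFiniteSupport <|
      (hasFiniteSupport_nLap hφS).fun_comp (g := fun z : ℂ => ‖z‖ ^ 2) (by simp)
  calc (1 + q / ((q : ℝ) + 1) ^ 2) * ∑' v, ‖φ v‖ ^ 2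
      = ∑ v ∈ S, ‖φ v‖ ^ 2 + ∑ u ∈ S, q / ((q : ℝ) + 1) ^ 2 * ‖φ u‖ ^ 2 := by
        rw [tsum_eq_sum (s := S) fun v hv => by simp [hφ v (mt (hS v).mpr hv)], add_mul, one_mul,
          mul_sum]
    _ ≤ ∑ v ∈ S, ‖nLap G φ v‖ ^ 2 + ∑ u ∈ S, ∑ w ∈ G.childFinset o u, ‖nLap G φ w‖ ^ 2 := by
        gcongr with v hv u hu
        · rw [hG.nLap_eq_self_of_dist_eq hφ ((hS v).mp hv)]
        · exact hG.mul_norm_sq_le_sum_childFinset_norm_nLap_sq hd hφ ((hS u).mp hu)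
    _ = ∑ v ∈ S ∪ S.biUnion (G.childFinset o), ‖nLap G φ v‖ ^ 2 := by
        rw [sum_union hdisj, sum_biUnion (hG.isAcyclic.pairwiseDisjoint_childFinset o _)]
    _ ≤ ∑' v, ‖nLap G φ v‖ ^ 2 := hsummable.sum_le_tsum _ fun _ _ => by positivity

end SimpleGraph.IsTree

theorem tree_level_lambda_set {V : Type*} (G : SimpleGraph V) [G.LocallyFinite]
    (q : ℕ) (hconn : G.Connected) (hacyc : G.IsAcyclic)
    (hdeg : ∀ v : V, G.degree v = q + 1)
    (o : V) (m : ℕ) (φ : V → ℂ)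
    (hsupp : ∀ v : V, v ∉ {v : V | G.dist o v = m} → φ v = 0) :
    (∑' v : V, ‖φ v‖ ^ 2) ≤
      (1 + (q : ℝ) / ((q : ℝ) + 1) ^ 2)⁻¹ * ∑' v : V, ‖nLap G φ v‖ ^ 2 := by
  rw [le_inv_mul_iff₀ (by positivity)]
  exact IsTree.one_add_div_mul_tsum_norm_sq_le_tsum_norm_nLap_sq ⟨hconn, hacyc⟩ hdeg hsupp
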